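/- Let V be a finite-dimensional real vector space with a symplectic form ω, and let c : V → V be a linear anti-symplectic involution. Then there exists a linear complex structure J : V → V (J ∘ J = −id) which is tamed by ω (ω(v, J v) > 0 for all v ≠ 0) and for which c is J-antiholomorphic, i.e. c ∘ J = −J ∘ c. (Linear version of the non-emptiness part of Proposition 1.1: the space ℝ𝒥_ω of almost complex structures tamed by ω for which c_X is antiholomorphic is non-empty.) -/

import Mathlib

set_option maxHeartbeats 1000000


/-- Let `V` be a finite-dimensional real vector space with a symplectic form
`ω`, and let `c : V → V` be a linear anti-symplectic involution. Then there exists a linear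
complex structure `J : V → V` (`J ∘ J = −id`) which is tamed by `ω` (`ω(v, J v) > 0` for all
`v ≠ 0`) and for which `c` is `J`-antiholomorphic, i.e. `c ∘ J = −J ∘ c`. -/
theorem exists_tamed_complex_structure_antiholomorphic_involution
    (V : Type*) [AddCommGroup V] [Module ℝ V] [FiniteDimensional ℝ V]
    (ω : V →ₗ[ℝ] V →ₗ[ℝ] ℝ)
    (halt : ∀ v : V, ω v v = 0)
    (hnondeg : ∀ v : V, (∀ w : V, ω v w = 0) → v = 0)
    (c : V →ₗ[ℝ] V) (hc : ∀ v : V, c (c v) = v)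
    (hanti : ∀ u v : V, ω (c u) (c v) = - ω u v) :
    ∃ J : V →ₗ[ℝ] V,
      (∀ v : V, J (J v) = -v) ∧
      (∀ v : V, v ≠ 0 → 0 < ω v (J v)) ∧
      (∀ v : V, c (J v) = - J (c v)) := by
  classical
  -- skew-symmetry of ω
  have hskew : ∀ u v : V, ω u v = - ω v u := by
    intro u v
    have h := halt (u + v)
    simp only [map_add, LinearMap.add_apply, halt] at h
    linarith
  -- the ±1 eigenspaces of c
  set Vp : Submodule ℝ V := LinearMap.ker (c - LinearMap.id) with hVpdef
  set Vm : Submodule ℝ V := LinearMap.ker (c + LinearMap.id) with hVmdef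
  have memVp : ∀ v : V, v ∈ Vp ↔ c v = v := by
    intro v
    simp [hVpdef, LinearMap.mem_ker, LinearMap.sub_apply, sub_eq_zero]
  have memVm : ∀ v : V, v ∈ Vm ↔ c v = -v := by
    intro v
    simp [hVmdef, LinearMap.mem_ker, LinearMap.add_apply, add_eq_zero_iff_eq_neg]
  -- ω vanishes on each eigenspace
  have ωpp : ∀ u v : V, c u = u → c v = v → ω u v = 0 := by
    intro u v hu hv
    have h := hanti u v
    rw [hu, hv] at h; linarith
  have ωmm : ∀ u v : V, c u = -u → c v = -v → ω u v = 0 := by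
    intro u v hu hv
    have h := hanti u v
    rw [hu, hv] at h
    simp only [map_neg, LinearMap.neg_apply, neg_neg] at h
    linarith
  -- projections onto the eigenspaces
  have hp_mem : ∀ v : V, ((1 : ℝ)/2) • (v + c v) ∈ Vp := by
    intro v
    rw [memVp]
    simp only [map_smul, map_add, hc]
    rw [add_comm (c v) v]
  have hm_mem : ∀ v : V, ((1 : ℝ)/2) • (v - c v) ∈ Vm := by
    intro v
    rw [memVm]
    simp only [map_smul, map_sub, hc]
    rw [← smul_neg, neg_sub]
  let pp : V →ₗ[ℝ] Vp :=
    LinearMap.codRestrict Vp (((1 : ℝ)/2) • (LinearMap.id + c)) (fun v => hp_mem v)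
  let pm : V →ₗ[ℝ] Vm :=
    LinearMap.codRestrict Vm (((1 : ℝ)/2) • (LinearMap.id - c)) (fun v => hm_mem v)
  have hpp_coe : ∀ v : V, (pp v : V) = ((1 : ℝ)/2) • (v + c v) := fun v => rfl
  have hpm_coe : ∀ v : V, (pm v : V) = ((1 : ℝ)/2) • (v - c v) := fun v => rfl
  have hsum : ∀ v : V, (pp v : V) + (pm v : V) = v := by
    intro v
    rw [hpp_coe, hpm_coe]
    module
  have hppVp : ∀ x : Vp, pp (x : V) = x := by
    intro x
    apply Subtype.ext
    rw [hpp_coe, (memVp x).mp x.2]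
    module
  have hppVm : ∀ x : Vm, pp (x : V) = 0 := by
    intro x
    apply Subtype.ext
    rw [hpp_coe, (memVm x).mp x.2]
    simp only [ZeroMemClass.coe_zero]
    module
  have hpmVp : ∀ x : Vp, pm (x : V) = 0 := by
    intro x
    apply Subtype.ext
    rw [hpm_coe, (memVp x).mp x.2]
    simp only [ZeroMemClass.coe_zero]
    module
  have hpmVm : ∀ x : Vm, pm (x : V) = x := by
    intro x
    apply Subtype.ext
    rw [hpm_coe, (memVm x).mp x.2]
    module
  -- the pairing maps between the eigenspaces and duals
  let Φ : Vm →ₗ[ℝ] Module.Dual ℝ Vp :=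
    (Vp.subtype.dualMap).comp (ω.flip.comp Vm.subtype)
  have hΦ : ∀ (q : Vm) (u : Vp), Φ q u = ω (u : V) (q : V) := fun q u => rfl
  let Ψ : Vp →ₗ[ℝ] Module.Dual ℝ Vm :=
    (Vm.subtype.dualMap).comp (ω.comp Vp.subtype)
  have hΨ : ∀ (u : Vp) (q : Vm), Ψ u q = ω (u : V) (q : V) := fun u q => rfl
  have hΦinj : Function.Injective Φ := by
    rw [← LinearMap.ker_eq_bot]
    rw [LinearMap.ker_eq_bot']
    intro q hq
    apply Subtype.ext
    simp only [ZeroMemClass.coe_zero]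
    apply hnondeg
    intro w
    have h1 : ω ((pp w : V)) (q : V) = 0 := by
      have := DFunLike.congr_fun hq (pp w)
      rw [hΦ] at this
      simp only [LinearMap.zero_apply] at this; exact this
    have h2 : ω (q : V) ((pm w : V)) = 0 :=
      ωmm _ _ ((memVm _).mp q.2) ((memVm _).mp (pm w).2)
    have hw := hsum w
    calc ω (q : V) w = ω (q : V) ((pp w : V) + (pm w : V)) := by rw [hw]
      _ = ω (q : V) (pp w : V) + ω (q : V) (pm w : V) := by rw [map_add]
      _ = 0 := by rw [h2, hskew (q : V) (pp w : V), h1]; ring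
  have hΨinj : Function.Injective Ψ := by
    rw [← LinearMap.ker_eq_bot]
    rw [LinearMap.ker_eq_bot']
    intro u hu
    apply Subtype.ext
    simp only [ZeroMemClass.coe_zero]
    apply hnondeg
    intro w
    have h1 : ω (u : V) ((pm w : V)) = 0 := by
      have := DFunLike.congr_fun hu (pm w)
      rw [hΨ] at this
      simp only [LinearMap.zero_apply] at this; exact this
    have h2 : ω (u : V) ((pp w : V)) = 0 :=
      ωpp _ _ ((memVp _).mp u.2) ((memVp _).mp (pp w).2)
    have hw := hsum w
    calc ω (u : V) w = ω (u : V) ((pp w : V) + (pm w : V)) := by rw [hw]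
      _ = ω (u : V) (pp w : V) + ω (u : V) (pm w : V) := by rw [map_add]
      _ = 0 := by rw [h1, h2]; ring
  -- equality of dimensions
  have hrank : Module.finrank ℝ Vm = Module.finrank ℝ (Module.Dual ℝ Vp) := by
    rw [Subspace.dual_finrank_eq]
    apply le_antisymm
    · have := LinearMap.finrank_le_finrank_of_injective hΦinj
      rwa [Subspace.dual_finrank_eq] at this
    · have := LinearMap.finrank_le_finrank_of_injective hΨinj
      rwa [Subspace.dual_finrank_eq] at this
  let Φe : Vm ≃ₗ[ℝ] Module.Dual ℝ Vp := Φ.linearEquivOfInjective hΦinj hrank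
  have hΦe : ∀ q : Vm, Φe q = Φ q := fun q => rfl
  -- a positive definite symmetric form on Vp, via a basis
  let b : Module.Basis (Module.Free.ChooseBasisIndex ℝ Vp) ℝ Vp := Module.Free.chooseBasis ℝ Vp
  have htd : ∀ u v : Vp, b.toDual u v = ∑ i, b.repr v i * b.repr u i := by
    intro u v
    conv_lhs => rw [← b.sum_repr v]
    rw [map_sum]
    congr 1
    funext i
    rw [map_smul, smul_eq_mul, Module.Basis.toDual_eq_repr]
  have htd_symm : ∀ u v : Vp, b.toDual u v = b.toDual v u := by
    intro u v
    rw [htd, htd]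
    exact Finset.sum_congr rfl fun i _ => mul_comm _ _
  have htd_nonneg : ∀ u : Vp, 0 ≤ b.toDual u u := by
    intro u
    rw [htd]
    exact Finset.sum_nonneg fun i _ => mul_self_nonneg _
  have htd_pos : ∀ u : Vp, u ≠ 0 → 0 < b.toDual u u := by
    intro u hu
    rw [htd]
    have : ∃ i, b.repr u i ≠ 0 := by
      by_contra h
      push_neg at h
      apply hu
      have : b.repr u = 0 := by ext i; exact h i
      simpa using congrArg b.repr.symm this
    obtain ⟨i, hi⟩ := this
    apply Finset.sum_pos' (fun j _ => mul_self_nonneg _)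
    exact ⟨i, Finset.mem_univ i, mul_self_pos.mpr hi⟩
  -- the isomorphism T : Vp ≃ Vm
  let T : Vp ≃ₗ[ℝ] Vm := b.toDualEquiv.trans Φe.symm
  have hT : ∀ u u' : Vp, ω (u' : V) ((T u : Vm) : V) = b.toDual u u' := by
    intro u u'
    have : Φ (T u) = b.toDual u := by
      have h1 : Φe (T u) = b.toDualEquiv u := by
        simp [T]
      rw [hΦe] at h1
      rw [h1, Module.Basis.toDualEquiv_apply]
    have := DFunLike.congr_fun this u'
    rw [hΦ] at this
    exact this
  -- the complex structure
  let J : V →ₗ[ℝ] V :=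
    Vm.subtype ∘ₗ (T : Vp →ₗ[ℝ] Vm) ∘ₗ pp - Vp.subtype ∘ₗ (T.symm : Vm →ₗ[ℝ] Vp) ∘ₗ pm
  have hJ : ∀ v : V, J v = ((T (pp v) : Vm) : V) - ((T.symm (pm v) : Vp) : V) := fun v => rfl
  refine ⟨J, ?_, ?_, ?_⟩
  · -- J ∘ J = -id
    intro v
    have h1 : pp (J v) = - T.symm (pm v) := by
      rw [hJ, map_sub, hppVm, hppVp]
      simp
    have h2 : pm (J v) = T (pp v) := by
      rw [hJ, map_sub, hpmVm, hpmVp]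
      simp
    rw [hJ (J v), h1, h2]
    simp only [map_neg, LinearEquiv.apply_symm_apply, LinearEquiv.symm_apply_apply]
    have := hsum v
    push_cast
    linear_combination (norm := module) -this
  · -- taming
    intro v hv
    set u : Vp := pp v with hu
    set q : Vm := pm v with hq
    set w : Vp := T.symm q with hw
    have hqT : (q : V) = ((T w : Vm) : V) := by rw [hw]; simp
    have hcross1 : ω (q : V) ((T u : Vm) : V) = 0 :=
      ωmm _ _ ((memVm _).mp q.2) ((memVm _).mp (T u).2)
    have hcross2 : ω (u : V) ((w : Vp) : V) = 0 :=
      ωpp _ _ ((memVp _).mp u.2) ((memVp _).mp w.2)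
    have hqw : ω (q : V) ((w : Vp) : V) = - b.toDual w w := by
      rw [hqT, hskew, hT]
    have huu : ω (u : V) ((T u : Vm) : V) = b.toDual u u := hT u u
    have hsplit : ∀ x : V, ω v x = ω (u : V) x + ω (q : V) x := by
      intro x
      conv_lhs => rw [← hsum v]
      rw [map_add, LinearMap.add_apply]
    have hval : ω v (J v) = b.toDual u u + b.toDual w w := by
      have h3 : J v = ((T u : Vm) : V) - ((w : Vp) : V) := by
        rw [hJ, ← hu, ← hq, ← hw]
      rw [h3, map_sub, hsplit (((T u : Vm) : V)), hsplit ((w : Vp) : V)]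
      rw [huu, hcross1, hcross2, hqw]
      ring
    rw [hval]
    -- positivity: u and w are not both zero
    rcases eq_or_ne u 0 with hu0 | hu0
    · have hq0 : q ≠ 0 := by
        intro h
        apply hv
        rw [← hsum v, ← hu, ← hq, hu0, h]
        simp
      have hw0 : w ≠ 0 := by
        intro h
        apply hq0
        have hqT2 : q = T w := by rw [hw]; simp
        rw [hqT2, h, map_zero]
      have := htd_pos w hw0
      have := htd_nonneg u
      linarith
    · have := htd_pos u hu0
      have := htd_nonneg w
      linarith
  · -- antiholomorphicity
    intro v
    have hppc : pp (c v) = pp v := by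
      apply Subtype.ext
      rw [hpp_coe, hpp_coe, hc, add_comm]
    have hpmc : pm (c v) = - pm v := by
      apply Subtype.ext
      rw [hpm_coe]
      push_cast [hpm_coe]
      rw [hc]
      module
    have hcT : c ((T (pp v) : Vm) : V) = - ((T (pp v) : Vm) : V) :=
      (memVm _).mp (T (pp v)).2
    have hcTs : c ((T.symm (pm v) : Vp) : V) = ((T.symm (pm v) : Vp) : V) :=
      (memVp _).mp (T.symm (pm v)).2
    rw [hJ v, hJ (c v), hppc, hpmc, map_sub, hcT, hcTs, map_neg]
    push_cast
    module
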